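/- arXiv:1704.08436 — 2 statements merged into one kernel-verified Lean document; each statement's English description precedes it below -/
import Mathlib

section
/- Let u : ℝ³ → ℝ³ and p : ℝ³ → ℝ be twice continuously differentiable and satisfy the steady incompressible Euler equation (u·∇)u = −∇p. Let φ : I → ℝ³ be a C³ arclength streamline (φ′(s) = u(φ(s))/|u(φ(s))|, u(φ(s)) ≠ 0) with curvature κ(s) = |φ″(s)| > 0 continuously differentiable, unit tangent τ = φ′, unit normal n = φ″/κ, binormal b = τ × n, and torsion T defined by n′ = −κτ + T b. Then for all s ∈ I: −(Hess p)(φ(s))[τ(s), n(s)] = 3κ(s) D(s) + κ′(s) |u(φ(s))|², where D(s) := −⟨∇p(φ(s)), τ(s)⟩ is the material derivative of the speed |u| along the streamline and (Hess p)[v,w] denotes the second derivative bilinear form of p applied to the vectors v, w. (This is the first identity of the paper's Lemma rewriting the Euler equations via curvature: ∂_{r̄} D_t|u| = 3κ D_t|u| + ∂_s κ |u|².) -/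
/-- Cross product on `EuclideanSpace ℝ (Fin 3)`. -/
noncomputable def cross3 (v w : EuclideanSpace ℝ (Fin 3)) : EuclideanSpace ℝ (Fin 3) :=
  (WithLp.equiv 2 (Fin 3 → ℝ)).symm
    ![v 1 * w 2 - v 2 * w 1, v 2 * w 0 - v 0 * w 2, v 0 * w 1 - v 1 * w 0]

/-!
Write `q = ‖u ∘ φ‖`, so that `u ∘ φ = q • τ`. Euler's equation turns the derivative of `u ∘ φ`
into `-q⁻¹ • ∇p`, while the product rule gives `q' • τ + q • φ''`; comparing the two,
`∇p = -D • τ - q² κ • n` with `D = q q'`. Hence along the streamline `dp(n) = -q² κ`, and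
`dp(b) = 0`. Differentiating `dp(n) = -q² κ` in `s`, the left side gives `Hess p[τ, n] + dp(n')`,
where by the Frenet equation `dp(n') = κ D`, and the right side gives `-2 D κ - q² κ'`.
-/

open Filter Topology
open scoped Gradient RealInnerProductSpace

theorem inner_self_cross3 (v w : EuclideanSpace ℝ (Fin 3)) : ⟪v, cross3 v w⟫ = 0 := by
  simp only [cross3, WithLp.equiv_symm_apply, PiLp.inner_apply, RCLike.inner_apply,
    Real.ringHom_apply, Fin.sum_univ_three, Matrix.cons_val_zero, Matrix.cons_val_one,
    Matrix.cons_val]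
  ring

theorem inner_cross3_self (v w : EuclideanSpace ℝ (Fin 3)) : ⟪w, cross3 v w⟫ = 0 := by
  simp only [cross3, WithLp.equiv_symm_apply, PiLp.inner_apply, RCLike.inner_apply,
    Real.ringHom_apply, Fin.sum_univ_three, Matrix.cons_val_zero, Matrix.cons_val_one,
    Matrix.cons_val]
  ring

section Curves

variable {F : Type*} [NormedAddCommGroup F] [InnerProductSpace ℝ F]

theorem HasDerivAt.inner_eq_zero_of_norm_eventually_eq_one {γ : ℝ → F} {γ' : F} {t : ℝ}
    (hγ : HasDerivAt γ γ' t) (hunit : ∀ᶠ r in 𝓝 t, ‖γ r‖ = 1) : ⟪γ t, γ'⟫ = 0 := by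
  have hconst : HasDerivAt (‖γ ·‖ ^ 2) 0 t :=
    (hasDerivAt_const t (1 : ℝ)).congr_of_eventuallyEq (by
      filter_upwards [hunit] with r hr using by simp [hr])
  linarith [hγ.norm_sq.unique hconst]

theorem HasDerivAt.eq_inner_smul_add_norm_smul {v τ : ℝ → F} {a τ' : F} {t : ℝ}
    (hv : HasDerivAt v a t) (hτ : HasDerivAt τ τ' t) (hv0 : v t ≠ 0)
    (hvτ : ∀ᶠ r in 𝓝 t, v r = ‖v r‖ • τ r) :
    a = ⟪a, τ t⟫ • τ t + ‖v t‖ • τ' := by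
  set q' := _root_.deriv (‖v ·‖) t
  have hq : HasDerivAt (‖v ·‖) q' t := (hv.differentiableAt.norm ℝ hv0).hasDerivAt
  have ha : a = ‖v t‖ • τ' + q' • τ t :=
    hv.unique ((hq.smul hτ).congr_of_eventuallyEq hvτ)
  -- differentiating `‖v‖ ^ 2` in two ways identifies the speed derivative `q'`
  have hq' : q' = ⟪a, τ t⟫ := by
    have hinner : ⟪v t, a⟫ = ‖v t‖ * ⟪a, τ t⟫ := by
      conv_lhs => rw [hvτ.self_of_nhds]
      rw [real_inner_smul_left, real_inner_comm]
    have h := hv.norm_sq.unique (hq.pow 2)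
    rw [hinner] at h
    simp only [Nat.cast_ofNat, Nat.add_one_sub_one, pow_one] at h
    have hq0 : 2 * ‖v t‖ ≠ 0 := mul_ne_zero two_ne_zero (norm_ne_zero_iff.2 hv0)
    exact mul_left_cancel₀ hq0 (by rw [← h]; ring)
  rw [← hq', add_comm]
  exact ha

end Curves

section Frenet

variable {E : Type*} [NormedAddCommGroup E] [NormedSpace ℝ E]

theorem fderiv_fderiv_apply_tangent_normal {p : E → ℝ} {φ τ n b : ℝ → E} {κ T f : ℝ → ℝ}
    {f' s : ℝ} (hp : DifferentiableAt ℝ (fderiv ℝ p) (φ s)) (hφ : HasDerivAt φ (τ s) s)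
    (hn : HasDerivAt n (-(κ s) • τ s + T s • b s) s) (hf : HasDerivAt f f' s)
    (hpn : ∀ᶠ r in 𝓝 s, fderiv ℝ p (φ r) (n r) = f r) (hpb : fderiv ℝ p (φ s) (b s) = 0) :
    fderiv ℝ (fderiv ℝ p) (φ s) (τ s) (n s) = f' + κ s * fderiv ℝ p (φ s) (τ s) := by
  have h := (hp.hasFDerivAt.comp_hasDerivAt s hφ).clm_apply hn
  have := h.unique (hf.congr_of_eventuallyEq hpn)
  simp only [Function.comp_apply, map_add, map_smul, hpb, smul_eq_mul] at this
  linarith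

end Frenet

section Euler

variable {E : Type*} [NormedAddCommGroup E] [InnerProductSpace ℝ E] [CompleteSpace E]
  {u : E → E} {p : E → ℝ} {φ φ' φ'' : ℝ → E} {t : ℝ}

theorem hasDerivAt_comp_streamline (hu : DifferentiableAt ℝ u (φ t))
    (heuler : fderiv ℝ u (φ t) (u (φ t)) = -∇ p (φ t)) (hφ' : HasDerivAt φ (φ' t) t)
    (hstream : φ' t = ‖u (φ t)‖⁻¹ • u (φ t)) :
    HasDerivAt (fun r => u (φ r)) (-(‖u (φ t)‖⁻¹ • ∇ p (φ t))) t := by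
  have h := hu.hasFDerivAt.comp_hasDerivAt t hφ'
  rwa [hstream, map_smul, heuler, smul_neg] at h

theorem hasDerivAt_norm_sq_comp_streamline (hu : DifferentiableAt ℝ u (φ t))
    (heuler : fderiv ℝ u (φ t) (u (φ t)) = -∇ p (φ t)) (hφ' : HasDerivAt φ (φ' t) t)
    (hstream : φ' t = ‖u (φ t)‖⁻¹ • u (φ t)) :
    HasDerivAt (fun r => ‖u (φ r)‖ ^ 2) (-2 * ⟪∇ p (φ t), φ' t⟫) t := by
  convert (hasDerivAt_comp_streamline hu heuler hφ' hstream).norm_sq using 1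
  rw [hstream, inner_neg_right, real_inner_smul_right, real_inner_smul_right, real_inner_comm]
  ring

theorem gradient_eq_of_streamline (hu : DifferentiableAt ℝ u (φ t))
    (heuler : fderiv ℝ u (φ t) (u (φ t)) = -∇ p (φ t)) (hune : u (φ t) ≠ 0)
    (hφ' : HasDerivAt φ (φ' t) t) (hφ'' : HasDerivAt φ' (φ'' t) t)
    (hstream : ∀ᶠ r in 𝓝 t, φ' r = ‖u (φ r)‖⁻¹ • u (φ r)) :
    ∇ p (φ t) = ⟪∇ p (φ t), φ' t⟫ • φ' t - ‖u (φ t)‖ ^ 2 • φ'' t := by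
  have hq : ‖u (φ t)‖ ≠ 0 := norm_ne_zero_iff.2 hune
  have hflow : ∀ᶠ r in 𝓝 t, u (φ r) = ‖u (φ r)‖ • φ' r := by
    filter_upwards [hstream] with r hr
    rcases eq_or_ne (u (φ r)) 0 with h0 | h0
    · simp [h0]
    · rw [hr, smul_smul, mul_inv_cancel₀ (norm_ne_zero_iff.2 h0), one_smul]
  have h := (hasDerivAt_comp_streamline hu heuler hφ' hstream.self_of_nhds
    ).eq_inner_smul_add_norm_smul hφ'' hune hflow
  rw [inner_neg_left, real_inner_smul_left] at h
  calc ∇ p (φ t) = (-‖u (φ t)‖) • -(‖u (φ t)‖⁻¹ • ∇ p (φ t)) := by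
        rw [neg_smul_neg, smul_smul, mul_inv_cancel₀ hq, one_smul]
    _ = ⟪∇ p (φ t), φ' t⟫ • φ' t - ‖u (φ t)‖ ^ 2 • φ'' t := by
        rw [h]; match_scalars <;> field_simp

theorem fderiv_apply_normal_of_streamline (hu : DifferentiableAt ℝ u (φ t))
    (heuler : fderiv ℝ u (φ t) (u (φ t)) = -∇ p (φ t)) (hune : ∀ᶠ r in 𝓝 t, u (φ r) ≠ 0)
    (hφ' : HasDerivAt φ (φ' t) t) (hφ'' : HasDerivAt φ' (φ'' t) t)
    (hstream : ∀ᶠ r in 𝓝 t, φ' r = ‖u (φ r)‖⁻¹ • u (φ r)) (hφ''0 : φ'' t ≠ 0) :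
    fderiv ℝ p (φ t) (‖φ'' t‖⁻¹ • φ'' t) = -(‖u (φ t)‖ ^ 2 * ‖φ'' t‖) := by
  have horth : ⟪φ' t, φ'' t⟫ = 0 := hφ''.inner_eq_zero_of_norm_eventually_eq_one (by
    filter_upwards [hune, hstream] with r h0 hr
    rw [hr, norm_smul, norm_inv, norm_norm, inv_mul_cancel₀ (norm_ne_zero_iff.2 h0)])
  have hκ : ‖φ'' t‖ ≠ 0 := norm_ne_zero_iff.2 hφ''0
  rw [← inner_gradient_left,
    gradient_eq_of_streamline hu heuler hune.self_of_nhds hφ' hφ'' hstream, inner_sub_left,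
    real_inner_smul_left, real_inner_smul_left, real_inner_smul_right, real_inner_smul_right,
    horth, real_inner_self_eq_norm_sq]
  field_simp
  ring

theorem fderiv_apply_eq_zero_of_streamline {w : E} (hu : DifferentiableAt ℝ u (φ t))
    (heuler : fderiv ℝ u (φ t) (u (φ t)) = -∇ p (φ t)) (hune : u (φ t) ≠ 0)
    (hφ' : HasDerivAt φ (φ' t) t) (hφ'' : HasDerivAt φ' (φ'' t) t)
    (hstream : ∀ᶠ r in 𝓝 t, φ' r = ‖u (φ r)‖⁻¹ • u (φ r))
    (hw' : ⟪φ' t, w⟫ = 0) (hw'' : ⟪φ'' t, w⟫ = 0) :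
    fderiv ℝ p (φ t) w = 0 := by
  rw [← inner_gradient_left, gradient_eq_of_streamline hu heuler hune hφ' hφ'' hstream,
    inner_sub_left, real_inner_smul_left, real_inner_smul_left, hw', hw'']
  ring

end Euler

theorem euler_curvature_identity_normal_general
    (u : EuclideanSpace ℝ (Fin 3) → EuclideanSpace ℝ (Fin 3))
    (p : EuclideanSpace ℝ (Fin 3) → ℝ)
    (hu : ContDiff ℝ 2 u) (hp : ContDiff ℝ 2 p)
    (heuler : ∀ x, fderiv ℝ u x (u x) = - gradient p x)
    (I : Set ℝ) (hI : IsOpen I)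
    (φ φ' φ'' : ℝ → EuclideanSpace ℝ (Fin 3))
    (hφ' : ∀ s ∈ I, HasDerivAt φ (φ' s) s)
    (hφ'' : ∀ s ∈ I, HasDerivAt φ' (φ'' s) s)
    (hune : ∀ s ∈ I, u (φ s) ≠ 0)
    (hstream : ∀ s ∈ I, φ' s = ‖u (φ s)‖⁻¹ • u (φ s))
    (κ κ' : ℝ → ℝ) (hκ : ∀ s ∈ I, κ s = ‖φ'' s‖) (hκpos : ∀ s ∈ I, 0 < κ s)
    (hκ' : ∀ s ∈ I, HasDerivAt κ (κ' s) s)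
    (τ n b : ℝ → EuclideanSpace ℝ (Fin 3))
    (hτ : ∀ s ∈ I, τ s = φ' s) (hn : ∀ s ∈ I, n s = (κ s)⁻¹ • φ'' s)
    (hb : ∀ s ∈ I, b s = cross3 (τ s) (n s))
    (T : ℝ → ℝ)
    (hT : ∀ s ∈ I, HasDerivAt n (-(κ s) • τ s + T s • b s) s)
    (D : ℝ → ℝ) (hD : ∀ s ∈ I, D s = -(inner ℝ (gradient p (φ s)) (τ s) : ℝ)) :
    ∀ s ∈ I,
      -((fderiv ℝ (fderiv ℝ p) (φ s) (τ s)) (n s))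
        = 3 * κ s * D s + κ' s * ‖u (φ s)‖ ^ 2 := by
  intro s hs
  have hudiff : Differentiable ℝ u := hu.differentiable two_ne_zero
  have hnear : ∀ r ∈ I, ∀ᶠ r' in 𝓝 r, r' ∈ I := fun r hr => hI.mem_nhds hr
  have hpn : ∀ r ∈ I, fderiv ℝ p (φ r) (n r) = -(‖u (φ r)‖ ^ 2 * κ r) := fun r hr => by
    rw [hn r hr, hκ r hr]
    exact fderiv_apply_normal_of_streamline (hudiff _) (heuler _) ((hnear r hr).mono hune)
      (hφ' r hr) (hφ'' r hr) ((hnear r hr).mono hstream)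
      (norm_pos_iff.1 (hκ r hr ▸ hκpos r hr))
  have hpb : fderiv ℝ p (φ s) (b s) = 0 := by
    refine fderiv_apply_eq_zero_of_streamline (hudiff _) (heuler _) (hune s hs) (hφ' s hs)
      (hφ'' s hs) ((hnear s hs).mono hstream) ?_ ?_ <;> rw [hb s hs]
    · rw [← hτ s hs]; exact inner_self_cross3 _ _
    · rw [← smul_inv_smul₀ (hκpos s hs).ne' (φ'' s), ← hn s hs, real_inner_smul_left,
        inner_cross3_self, mul_zero]
  have hpτ : fderiv ℝ p (φ s) (τ s) = -D s := by rw [hD s hs, inner_gradient_left, neg_neg]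
  have hspeed : HasDerivAt (fun r => ‖u (φ r)‖ ^ 2) (2 * D s) s := by
    convert hasDerivAt_norm_sq_comp_streamline (hudiff _) (heuler _) (hφ' s hs)
      (hstream s hs) using 1
    rw [hD s hs, hτ s hs]; ring
  have hhess := fderiv_fderiv_apply_tangent_normal
    ((hp.fderiv_right le_rfl).differentiable one_ne_zero _) (hτ s hs ▸ hφ' s hs) (hT s hs)
    ((hspeed.mul (hκ' s hs)).neg) ((hnear s hs).mono hpn) hpb
  rw [hhess, hpτ]
  ring

/-- First curvature identity for the steady Euler equations along a C³
arclength streamline: `−(Hess p)[τ, n] = 3κ D + κ′ |u|²`, where `D = −⟨∇p, τ⟩` is the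
material derivative of the speed (the paper's `∂_{r̄} D_t|u| = 3κ D_t|u| + ∂_s κ |u|²`). -/
theorem euler_curvature_identity_normal
    (u : EuclideanSpace ℝ (Fin 3) → EuclideanSpace ℝ (Fin 3))
    (p : EuclideanSpace ℝ (Fin 3) → ℝ)
    (hu : ContDiff ℝ 2 u) (hp : ContDiff ℝ 2 p)
    (heuler : ∀ x, fderiv ℝ u x (u x) = - gradient p x)
    (hdiv : ∀ x, LinearMap.trace ℝ (EuclideanSpace ℝ (Fin 3))
      ((fderiv ℝ u x).toLinearMap) = 0)
    (I : Set ℝ) (hI : IsOpen I)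
    (φ φ' φ'' φ''' : ℝ → EuclideanSpace ℝ (Fin 3))
    (hφ' : ∀ s ∈ I, HasDerivAt φ (φ' s) s)
    (hφ'' : ∀ s ∈ I, HasDerivAt φ' (φ'' s) s)
    (hφ''' : ∀ s ∈ I, HasDerivAt φ'' (φ''' s) s)
    (hune : ∀ s ∈ I, u (φ s) ≠ 0)
    (hstream : ∀ s ∈ I, φ' s = ‖u (φ s)‖⁻¹ • u (φ s))
    (κ κ' : ℝ → ℝ) (hκ : ∀ s ∈ I, κ s = ‖φ'' s‖) (hκpos : ∀ s ∈ I, 0 < κ s)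
    (hκ' : ∀ s ∈ I, HasDerivAt κ (κ' s) s)
    (τ n b : ℝ → EuclideanSpace ℝ (Fin 3))
    (hτ : ∀ s ∈ I, τ s = φ' s) (hn : ∀ s ∈ I, n s = (κ s)⁻¹ • φ'' s)
    (hb : ∀ s ∈ I, b s = cross3 (τ s) (n s))
    (T : ℝ → ℝ)
    (hT : ∀ s ∈ I, HasDerivAt n (-(κ s) • τ s + T s • b s) s)
    (D : ℝ → ℝ) (hD : ∀ s ∈ I, D s = -(inner ℝ (gradient p (φ s)) (τ s) : ℝ)) :
    ∀ s ∈ I,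
      -((fderiv ℝ (fderiv ℝ p) (φ s) (τ s)) (n s))
        = 3 * κ s * D s + κ' s * ‖u (φ s)‖ ^ 2 :=
  euler_curvature_identity_normal_general u p hu hp heuler I hI φ φ' φ'' hφ' hφ'' hune hstream κ κ'
    hκ hκpos hκ' τ n b hτ hn hb T hT D hD
end

section
/- Let v_r, v_z : [0,∞) × ℝ → ℝ be continuously differentiable with v_z > 0 everywhere and ∂_r(r v_r) + r ∂_z v_z = 0 for all r ≥ 0, z ∈ ℝ. Let R̃ : (0,∞) × ℝ → (0,∞) be continuously differentiable in both variables with R̃(r̃₀, 0) = r̃₀, ∂_z R̃(r̃₀, z) = v_r(R̃(r̃₀, z), z)/v_z(R̃(r̃₀, z), z), and ∂_{r̃₀} R̃ > 0. Define the inflow propagation ρ(r̃₀, z) := 2 r̃₀ / ∂_{r̃₀}[ R̃(r̃₀, z)² ] and the inflow profile U_in(r̃₀) := v_z(r̃₀, 0). Then for all (r̃₀, z): v_z( R̃(r̃₀, z), z ) = ρ(r̃₀, z) · U_in(r̃₀), and v_r( R̃(r̃₀, z), z ) = ∂_z R̃(r̃₀, z) · v_z( R̃(r̃₀, z), z ).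 -/
/-!
The Stokes stream function `ψ(r, z) = ∫₀ʳ s v_z(s, z) ds` satisfies `∂_r ψ = r v_z` and, by the
divergence-free condition, `∂_z ψ = -r v_r`. Along a stream line `z ↦ (R̃(r̃₀, z), z)`, whose slope
is `v_r / v_z`, the chain rule makes `ψ(R̃(r̃₀, z), z)` constant, equal to its inflow value
`ψ(r̃₀, 0)`. Differentiating this identity in `r̃₀` gives
`r̃₀ U_in(r̃₀) = R̃ v_z(R̃, z) ∂_{r̃₀} R̃ = ½ v_z(R̃, z) ∂_{r̃₀}(R̃²)`, the formula for `v_z`; the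
formula for `v_r` is the stream-line equation itself.
-/

open Set Filter Topology Asymptotics Function

/-- Mean value theorem in the first variable: continuity of `f₁` at `p` makes the error `o(‖h‖)`. -/
theorem hasFDerivAt_of_hasDerivAt_fst_of_continuousAt {E : Type*} [NormedAddCommGroup E]
    [NormedSpace ℝ E] {f f₁ : ℝ × ℝ → E} {f₂ : E} {p : ℝ × ℝ}
    (h₁ : ∀ᶠ q in 𝓝 p, HasDerivAt (fun x => f (x, q.2)) (f₁ q) q.1)
    (hf₁ : ContinuousAt f₁ p) (h₂ : HasDerivAt (fun y => f (p.1, y)) f₂ p.2) :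
    HasFDerivAt f ((ContinuousLinearMap.fst ℝ ℝ ℝ).smulRight (f₁ p) +
      (ContinuousLinearMap.snd ℝ ℝ ℝ).smulRight f₂) p := by
  rw [hasFDerivAt_iff_isLittleO_nhds_zero]
  have hsplit : ∀ h : ℝ × ℝ, f (p + h) - f p - ((ContinuousLinearMap.fst ℝ ℝ ℝ).smulRight (f₁ p) +
      (ContinuousLinearMap.snd ℝ ℝ ℝ).smulRight f₂) h =
      (f (p.1 + h.1, p.2 + h.2) - f (p.1, p.2 + h.2) - h.1 • f₁ p) +
        (f (p.1, p.2 + h.2) - f (p.1, p.2) - h.2 • f₂) := by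
    intro h
    rw [show p + h = (p.1 + h.1, p.2 + h.2) from rfl]
    simp only [add_apply,
      ContinuousLinearMap.smulRight_apply, ContinuousLinearMap.coe_fst',
      ContinuousLinearMap.coe_snd']
    abel
  simp_rw [hsplit]
  refine IsLittleO.add ?_ ?_
  · rw [isLittleO_iff]
    intro c hc
    obtain ⟨δ, hδ, hball⟩ := Metric.eventually_nhds_iff_ball.1
      (h₁.and (hf₁.eventually (Metric.closedBall_mem_nhds (f₁ p) hc)))
    filter_upwards [Metric.ball_mem_nhds (0 : ℝ × ℝ) hδ] with h hh
    rw [mem_ball_zero_iff] at hh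
    have hmem : ∀ x ∈ Metric.ball p.1 δ, (x, p.2 + h.2) ∈ Metric.ball p δ := fun x hx =>
      by rw [Metric.mem_ball, Prod.dist_eq]
         exact max_lt hx (by simpa [Real.dist_eq] using (norm_snd_le h).trans_lt hh)
    have hmvt := Convex.norm_image_sub_le_of_norm_hasDerivWithin_le
      (f := fun x => f (x, p.2 + h.2) - x • f₁ p) (f' := fun x => f₁ (x, p.2 + h.2) - f₁ p)
      (fun x hx => (((hball _ (hmem x hx)).1.sub
        ((hasDerivAt_id x).smul_const (f₁ p))).congr_deriv (by simp)).hasDerivWithinAt)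
      (fun x hx => by simpa [dist_eq_norm] using (hball _ (hmem x hx)).2)
      (convex_ball p.1 δ) (Metric.mem_ball_self hδ)
      (y := p.1 + h.1) (by simpa [Real.dist_eq] using (norm_fst_le h).trans_lt hh)
    calc ‖f (p.1 + h.1, p.2 + h.2) - f (p.1, p.2 + h.2) - h.1 • f₁ p‖
        = ‖f (p.1 + h.1, p.2 + h.2) - (p.1 + h.1) • f₁ p - (f (p.1, p.2 + h.2) - p.1 • f₁ p)‖ := by
          congr 1; rw [add_smul]; abel
      _ ≤ c * ‖p.1 + h.1 - p.1‖ := hmvt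
      _ ≤ c * ‖h‖ := by
          gcongr
          simpa using norm_fst_le h
  · have h₂' := (hasDerivAt_iff_isLittleO_nhds_zero.1 h₂).comp_tendsto
      (continuous_snd.tendsto' (0 : ℝ × ℝ) 0 rfl)
    exact h₂'.trans_isBigO isBigO_snd_prod'
theorem hasDerivAt_intervalIntegral_of_continuousOn {E : Type*} [NormedAddCommGroup E]
    [NormedSpace ℝ E] {F F' : ℝ → ℝ → E} {a b w₀ δ : ℝ} (hδ : 0 < δ)
    (hF : ∀ w ∈ Metric.ball w₀ δ, ContinuousOn (F w) (uIcc a b))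
    (hF' : ContinuousOn (uncurry F') (Metric.closedBall w₀ δ ×ˢ uIcc a b))
    (hderiv : ∀ s ∈ uIoc a b, ∀ w ∈ Metric.ball w₀ δ, HasDerivAt (fun w => F w s) (F' w s) w) :
    HasDerivAt (fun w => ∫ s in a..b, F w s) (∫ s in a..b, F' w₀ s) w₀ := by
  obtain ⟨M, hM⟩ := ((isCompact_closedBall w₀ δ).prod isCompact_uIcc).exists_bound_of_continuousOn hF'
  have hF'₀ : ContinuousOn (F' w₀) (uIcc a b) :=
    hF'.comp (Continuous.prodMk_right w₀).continuousOn
      fun s hs => ⟨Metric.mem_closedBall_self hδ.le, hs⟩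
  refine (intervalIntegral.hasDerivAt_integral_of_dominated_loc_of_deriv_le (bound := fun _ => M)
    (Metric.ball_mem_nhds w₀ hδ) ?_ (hF w₀ (Metric.mem_ball_self hδ)).intervalIntegrable
    ((hF'₀.mono uIoc_subset_uIcc).aestronglyMeasurable measurableSet_uIoc) ?_
    intervalIntegrable_const (Eventually.of_forall hderiv)).2
  · filter_upwards [Metric.ball_mem_nhds w₀ hδ] with w hw
    exact ((hF w hw).mono uIoc_subset_uIcc).aestronglyMeasurable measurableSet_uIoc
  · exact Eventually.of_forall fun s hs w hw =>
      hM (w, s) ⟨Metric.ball_subset_closedBall hw, uIoc_subset_uIcc hs⟩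

section HalfPlane

variable {u : ℝ → ℝ → ℝ}

theorem halfPlane_mem_nhds {q : ℝ × ℝ} (hq : 0 < q.1) : {q : ℝ × ℝ | 0 ≤ q.1} ∈ 𝓝 q :=
  continuous_fst.continuousAt.preimage_mem_nhds (Ici_mem_nhds hq)

theorem differentiableAt_fst_of_contDiffOn_halfPlane
    (hu : ContDiffOn ℝ 1 (fun q : ℝ × ℝ => u q.1 q.2) {q | 0 ≤ q.1}) {s : ℝ} (hs : 0 < s)
    (w : ℝ) : DifferentiableAt ℝ (fun r => u r w) s :=
  ((hu.contDiffAt (halfPlane_mem_nhds (q := (s, w)) hs)).differentiableAt one_ne_zero).comp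
    (f := fun r => (r, w)) s
    (differentiableAt_id.prodMk (differentiableAt_const w))

/-- The vertical line through `(s, w)` lies in the half-plane, so this holds even for `s = 0`. -/
theorem hasDerivAt_snd_of_contDiffOn_halfPlane
    (hu : ContDiffOn ℝ 1 (fun q : ℝ × ℝ => u q.1 q.2) {q | 0 ≤ q.1}) {s : ℝ} (hs : 0 ≤ s)
    (w : ℝ) : HasDerivAt (fun w => u s w)
      (fderivWithin ℝ (fun q : ℝ × ℝ => u q.1 q.2) {q | 0 ≤ q.1} (s, w) (0, 1)) w := by
  have h := ((hu.differentiableOn one_ne_zero (s, w) hs).hasFDerivWithinAt).comp_hasDerivWithinAt w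
    ((hasDerivAt_const w s).prodMk (hasDerivAt_id w)).hasDerivWithinAt (s := univ)
    fun _ _ => hs
  exact hasDerivWithinAt_univ.1 h

theorem continuousOn_deriv_snd_of_contDiffOn_halfPlane
    (hu : ContDiffOn ℝ 1 (fun q : ℝ × ℝ => u q.1 q.2) {q | 0 ≤ q.1}) :
    ContinuousOn (fun q : ℝ × ℝ => deriv (fun w => u q.1 w) q.2) {q | 0 ≤ q.1} := by
  have hconv : Convex ℝ {q : ℝ × ℝ | 0 ≤ q.1} :=
    convex_halfSpace_ge (ContinuousLinearMap.fst ℝ ℝ ℝ).isLinear 0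
  have hint : (interior {q : ℝ × ℝ | 0 ≤ q.1}).Nonempty :=
    ⟨(1, 0), mem_interior_iff_mem_nhds.2 (halfPlane_mem_nhds one_pos)⟩
  refine ((hu.continuousOn_fderivWithin (uniqueDiffOn_convex hconv hint) le_rfl).clm_apply
    (continuousOn_const (c := ((0 : ℝ), (1 : ℝ))))).congr fun q hq => ?_
  exact (hasDerivAt_snd_of_contDiffOn_halfPlane hu hq q.2).deriv

end HalfPlane

noncomputable def streamFunction (vz : ℝ → ℝ → ℝ) (r z : ℝ) : ℝ :=
  ∫ s in (0 : ℝ)..r, s * vz s z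

section StreamFunction

variable {vr vz : ℝ → ℝ → ℝ}

theorem continuousOn_mul_of_continuousOn_halfPlane
    (hvz : ContinuousOn (fun q : ℝ × ℝ => vz q.1 q.2) {q | 0 ≤ q.1}) (z : ℝ) :
    ContinuousOn (fun s => s * vz s z) (Ici 0) :=
  continuousOn_id.mul (hvz.comp (Continuous.prodMk_left z).continuousOn fun _ hs => hs)

theorem hasDerivAt_streamFunction_fst
    (hvz : ContinuousOn (fun q : ℝ × ℝ => vz q.1 q.2) {q | 0 ≤ q.1}) {r : ℝ} (hr : 0 < r)
    (z : ℝ) : HasDerivAt (fun r => streamFunction vz r z) (r * vz r z) r := by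
  have hcont := continuousOn_mul_of_continuousOn_halfPlane hvz z
  exact intervalIntegral.integral_hasDerivAt_right
    ((hcont.mono (uIcc_of_le hr.le ▸ Icc_subset_Ici_self)).intervalIntegrable)
    ((hcont.mono Ioi_subset_Ici_self).stronglyMeasurableAtFilter isOpen_Ioi r hr)
    (hcont.continuousAt (Ici_mem_nhds hr))

theorem integral_mul_deriv_snd_eq_neg
    (hvr : ContDiffOn ℝ 1 (fun q : ℝ × ℝ => vr q.1 q.2) {q | 0 ≤ q.1})
    (hvz : ContDiffOn ℝ 1 (fun q : ℝ × ℝ => vz q.1 q.2) {q | 0 ≤ q.1})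
    (hdivfree : ∀ r z : ℝ, 0 ≤ r →
      deriv (fun r' => r' * vr r' z) r + r * deriv (fun z' => vz r z') z = 0)
    {a : ℝ} (ha : 0 ≤ a) (z : ℝ) :
    ∫ s in (0 : ℝ)..a, s * deriv (fun z' => vz s z') z = -(a * vr a z) := by
  have hderiv : ∀ s ∈ Ioo 0 a, HasDerivAt (fun r => r * vr r z)
      (-(s * deriv (fun z' => vz s z') z)) s := fun s hs => by
    have hd : DifferentiableAt ℝ (fun r => r * vr r z) s :=
      differentiableAt_id.mul (differentiableAt_fst_of_contDiffOn_halfPlane hvr hs.1 z)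
    have h := hd.hasDerivAt
    rwa [eq_neg_of_add_eq_zero_left (hdivfree s z hs.1.le)] at h
  have hcont : ContinuousOn (fun s => s * deriv (fun z' => vz s z') z) (Icc 0 a) :=
    continuousOn_mul_of_continuousOn_halfPlane
      (continuousOn_deriv_snd_of_contDiffOn_halfPlane hvz) z |>.mono Icc_subset_Ici_self
  have hftc := intervalIntegral.integral_eq_sub_of_hasDerivAt_of_le ha
    ((continuousOn_mul_of_continuousOn_halfPlane hvr.continuousOn z).mono Icc_subset_Ici_self)
    hderiv (hcont.neg.intervalIntegrable_of_Icc ha)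
  rw [intervalIntegral.integral_neg, zero_mul, sub_zero] at hftc
  exact neg_eq_iff_eq_neg.1 hftc


theorem hasDerivAt_streamFunction_snd
    (hvr : ContDiffOn ℝ 1 (fun q : ℝ × ℝ => vr q.1 q.2) {q | 0 ≤ q.1})
    (hvz : ContDiffOn ℝ 1 (fun q : ℝ × ℝ => vz q.1 q.2) {q | 0 ≤ q.1})
    (hdivfree : ∀ r z : ℝ, 0 ≤ r →
      deriv (fun r' => r' * vr r' z) r + r * deriv (fun z' => vz r z') z = 0)
    {a : ℝ} (ha : 0 ≤ a) (z : ℝ) :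
    HasDerivAt (fun z => streamFunction vz a z) (-(a * vr a z)) z := by
  rw [← integral_mul_deriv_snd_eq_neg hvr hvz hdivfree ha z]
  have hsub : uIcc 0 a ⊆ Ici 0 := uIcc_of_le ha ▸ Icc_subset_Ici_self
  have hF' : ContinuousOn (fun p : ℝ × ℝ => p.2 * deriv (fun z' => vz p.2 z') p.1)
      (Metric.closedBall z 1 ×ˢ uIcc 0 a) :=
    continuous_snd.continuousOn.mul
      ((continuousOn_deriv_snd_of_contDiffOn_halfPlane hvz).comp continuous_swap.continuousOn
        fun p hp => hsub hp.2)
  refine hasDerivAt_intervalIntegral_of_continuousOn (F' := fun w s => s * deriv (vz s) w) one_pos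
    (fun w _ => (continuousOn_mul_of_continuousOn_halfPlane hvz.continuousOn w).mono hsub)
    hF' fun s hs w _ => ?_
  have hs : 0 ≤ s := (uIoc_of_le ha ▸ hs).1.le
  exact (hasDerivAt_snd_of_contDiffOn_halfPlane hvz hs w).differentiableAt.hasDerivAt.const_mul s


theorem hasFDerivAt_streamFunction
    (hvr : ContDiffOn ℝ 1 (fun q : ℝ × ℝ => vr q.1 q.2) {q | 0 ≤ q.1})
    (hvz : ContDiffOn ℝ 1 (fun q : ℝ × ℝ => vz q.1 q.2) {q | 0 ≤ q.1})
    (hdivfree : ∀ r z : ℝ, 0 ≤ r →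
      deriv (fun r' => r' * vr r' z) r + r * deriv (fun z' => vz r z') z = 0)
    {a : ℝ} (ha : 0 < a) (z : ℝ) :
    HasFDerivAt (fun q : ℝ × ℝ => streamFunction vz q.1 q.2)
      ((ContinuousLinearMap.fst ℝ ℝ ℝ).smulRight (a * vz a z) +
        (ContinuousLinearMap.snd ℝ ℝ ℝ).smulRight (-(a * vr a z))) (a, z) := by
  refine hasFDerivAt_of_hasDerivAt_fst_of_continuousAt (p := (a, z))
    (f := fun q => streamFunction vz q.1 q.2) (f₁ := fun q => q.1 * vz q.1 q.2) ?_
    ((continuous_fst.continuousOn.mul hvz.continuousOn).continuousAt (halfPlane_mem_nhds ha))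
    (hasDerivAt_streamFunction_snd hvr hvz hdivfree ha.le z)
  filter_upwards [continuous_fst.continuousAt.preimage_mem_nhds (Ioi_mem_nhds ha)] with q hq
  exact hasDerivAt_streamFunction_fst hvz.continuousOn hq q.2

theorem streamFunction_streamline_eq
    (hvr : ContDiffOn ℝ 1 (fun q : ℝ × ℝ => vr q.1 q.2) {q | 0 ≤ q.1})
    (hvz : ContDiffOn ℝ 1 (fun q : ℝ × ℝ => vz q.1 q.2) {q | 0 ≤ q.1})
    (hvz₀ : ∀ r z, vz r z ≠ 0)
    (hdivfree : ∀ r z : ℝ, 0 ≤ r →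
      deriv (fun r' => r' * vr r' z) r + r * deriv (fun z' => vz r z') z = 0)
    {R : ℝ → ℝ} (hRpos : ∀ z, 0 < R z) (hR : ∀ z, HasDerivAt R (vr (R z) z / vz (R z) z) z)
    (z₁ z₂ : ℝ) : streamFunction vz (R z₁) z₁ = streamFunction vz (R z₂) z₂ := by
  have hderiv : ∀ z, HasDerivAt (fun z => streamFunction vz (R z) z) 0 z := fun z => by
    refine ((hasFDerivAt_streamFunction hvr hvz hdivfree (hRpos z) z).comp_hasDerivAt
      (f := fun z => (R z, z)) z ((hR z).prodMk (hasDerivAt_id z))).congr_deriv ?_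
    simp only [add_apply, ContinuousLinearMap.smulRight_apply,
      ContinuousLinearMap.coe_fst', ContinuousLinearMap.coe_snd', smul_eq_mul]
    field_simp [hvz₀]
    ring
  exact is_const_of_deriv_eq_zero (fun z => (hderiv z).differentiableAt)
    (fun z => (hderiv z).deriv) z₁ z₂

theorem mul_eq_of_streamFunction_comp_eq
    (hvz : ContinuousOn (fun q : ℝ × ℝ => vz q.1 q.2) {q | 0 ≤ q.1})
    {R : ℝ → ℝ} {R' r₀ z₀ z : ℝ} (hr₀ : 0 < r₀) (hRpos : 0 < R r₀) (hR : HasDerivAt R R' r₀)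
    (hflux : ∀ᶠ r in 𝓝 r₀, streamFunction vz (R r) z = streamFunction vz r z₀) :
    r₀ * vz r₀ z₀ = R r₀ * vz (R r₀) z * R' :=
  (hasDerivAt_streamFunction_fst hvz hr₀ z₀).unique
    (((hasDerivAt_streamFunction_fst hvz hRpos z).comp r₀ hR).congr_of_eventuallyEq
      (hflux.mono fun _ h => h.symm))

end StreamFunction

theorem velocity_formulas_from_inflow_propagation_general
    (vr vz : ℝ → ℝ → ℝ)
    (hreg : ContDiffOn ℝ 1 (fun q : ℝ × ℝ => (vr q.1 q.2, vz q.1 q.2))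
      {q : ℝ × ℝ | 0 ≤ q.1})
    (hvz : ∀ r z : ℝ, 0 < vz r z)
    (hdivfree : ∀ r z : ℝ, 0 ≤ r →
      deriv (fun r' => r' * vr r' z) r + r * deriv (fun z' => vz r z') z = 0)
    (R : ℝ → ℝ → ℝ)
    (hRpos : ∀ r₀ z : ℝ, 0 < r₀ → 0 < R r₀ z)
    (hR0 : ∀ r₀ : ℝ, 0 < r₀ → R r₀ 0 = r₀)
    (hRz : ∀ r₀ z : ℝ, 0 < r₀ →
      HasDerivAt (fun z' => R r₀ z') (vr (R r₀ z) z / vz (R r₀ z) z) z)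
    (hRr : ∀ r₀ z : ℝ, 0 < r₀ → 0 < deriv (fun r => R r z) r₀)
    (ρ : ℝ → ℝ → ℝ)
    (hρ : ρ = fun r₀ z => 2 * r₀ / deriv (fun r => R r z ^ 2) r₀)
    (Uin : ℝ → ℝ) (hUin : Uin = fun r₀ => vz r₀ 0) :
    ∀ r₀ z : ℝ, 0 < r₀ →
      vz (R r₀ z) z = ρ r₀ z * Uin r₀
        ∧ vr (R r₀ z) z = deriv (fun z' => R r₀ z') z * vz (R r₀ z) z := by
  intro r₀ z hr₀
  have hvr' : ContDiffOn ℝ 1 (fun q : ℝ × ℝ => vr q.1 q.2) {q | 0 ≤ q.1} :=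
    contDiff_fst.comp_contDiffOn hreg
  have hvz' : ContDiffOn ℝ 1 (fun q : ℝ × ℝ => vz q.1 q.2) {q | 0 ≤ q.1} :=
    contDiff_snd.comp_contDiffOn hreg
  have hvz₀ : ∀ r z, vz r z ≠ 0 := fun r z => (hvz r z).ne'
  have hflux : ∀ r, 0 < r → streamFunction vz (R r z) z = streamFunction vz r 0 := fun r hr => by
    simpa only [hR0 r hr] using streamFunction_streamline_eq hvr' hvz' hvz₀ hdivfree
      (hRpos r · hr) (hRz r · hr) z 0
  -- `deriv` is `0` at points of non-differentiability, so `hRr` also gives differentiability.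
  have hRr' : HasDerivAt (fun r => R r z) (deriv (fun r => R r z) r₀) r₀ :=
    (differentiableAt_of_deriv_ne_zero (hRr r₀ z hr₀).ne').hasDerivAt
  have hjac := mul_eq_of_streamFunction_comp_eq hvz'.continuousOn hr₀ (hRpos r₀ z hr₀) hRr'
    (eventually_of_mem (Ioi_mem_nhds hr₀) hflux)
  refine ⟨?_, by rw [(hRz r₀ z hr₀).deriv, div_mul_cancel₀ _ (hvz₀ _ _)]⟩
  have hR_ne := (hRpos r₀ z hr₀).ne'
  have hR'_ne := (hRr r₀ z hr₀).ne'
  have hsq : HasDerivAt (fun r => R r z ^ 2)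
      ((2 : ℕ) * R r₀ z ^ (2 - 1) * deriv (fun r => R r z) r₀) r₀ := hRr'.pow 2
  simp only [hρ, hUin, hsq.deriv]
  norm_num
  field_simp
  linear_combination hjac.symm

/-- Explicit formulas for an axisymmetric divergence-free field in terms
of its stream surfaces `R̃(r̃₀, ·)` and the inflow propagation
`ρ = 2r̃₀/∂_{r̃₀}(R̃²)`: one has `v_z(R̃(r̃₀,z), z) = ρ(r̃₀,z) · U_in(r̃₀)` with
`U_in(r̃₀) = v_z(r̃₀, 0)`, and `v_r(R̃(r̃₀,z), z) = ∂_z R̃(r̃₀,z) · v_z(R̃(r̃₀,z), z)`. -/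
theorem velocity_formulas_from_inflow_propagation
    (vr vz : ℝ → ℝ → ℝ)
    (hreg : ContDiffOn ℝ 1 (fun q : ℝ × ℝ => (vr q.1 q.2, vz q.1 q.2))
      {q : ℝ × ℝ | 0 ≤ q.1})
    (hvz : ∀ r z : ℝ, 0 < vz r z)
    (hdivfree : ∀ r z : ℝ, 0 ≤ r →
      deriv (fun r' => r' * vr r' z) r + r * deriv (fun z' => vz r z') z = 0)
    (R : ℝ → ℝ → ℝ)
    (hRreg : ContDiffOn ℝ 1 (fun q : ℝ × ℝ => R q.1 q.2) {q : ℝ × ℝ | 0 < q.1})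
    (hRpos : ∀ r₀ z : ℝ, 0 < r₀ → 0 < R r₀ z)
    (hR0 : ∀ r₀ : ℝ, 0 < r₀ → R r₀ 0 = r₀)
    (hRz : ∀ r₀ z : ℝ, 0 < r₀ →
      HasDerivAt (fun z' => R r₀ z') (vr (R r₀ z) z / vz (R r₀ z) z) z)
    (hRr : ∀ r₀ z : ℝ, 0 < r₀ → 0 < deriv (fun r => R r z) r₀)
    (ρ : ℝ → ℝ → ℝ)
    (hρ : ρ = fun r₀ z => 2 * r₀ / deriv (fun r => R r z ^ 2) r₀)
    (Uin : ℝ → ℝ) (hUin : Uin = fun r₀ => vz r₀ 0) :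
    ∀ r₀ z : ℝ, 0 < r₀ →
      vz (R r₀ z) z = ρ r₀ z * Uin r₀
        ∧ vr (R r₀ z) z = deriv (fun z' => R r₀ z') z * vz (R r₀ z) z :=
  velocity_formulas_from_inflow_propagation_general vr vz hreg hvz hdivfree R hRpos hR0 hRz hRr ρ hρ
    Uin hUin
end
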